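/- Let k be a positive integer and s ≥ 1 an integer. Then ρ_{k,0}(2^s) = Σ_{i=0}^{⌊(s−1)/2⌋−1} 2^{ki + (s−2i−3)(k−1)} · ρ^(1)_{k,0}(8) + 2^{⌊(s−1)/2⌋·k} · ρ^(1)_{k,0}(2^{s−2⌊(s−1)/2⌋}) + 2^{⌊s/2⌋·k}, where the sum is empty when ⌊(s−1)/2⌋ = 0. -/

import Mathlib

/-!
Every solution of `x₁² + ⋯ + x_k² ≡ 0 (mod 2^s)` is either primitive or has all coordinates
even. An all-even solution is `2y` with `y` determined modulo `2^(s-1)`, and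
`4 ∑ yᵢ² ≡ 0 (mod 2^s)` only depends on `y` modulo `2^(s-2)`; hence
`ρ(2^s) = ρ⁽¹⁾(2^s) + 2^k ρ(2^(s-2))`.

For `m ≥ 3` the primitive solutions modulo `2^(m+1)` are those lifts of primitive solutions
modulo `2^m` (there are `2^k` lifts of each) whose sum of squares is `0` rather than `2^m`.
Adding `c = 2^(m-1)` to an odd coordinate `x_j` changes the sum of squares by
`2c x_j + c² ≡ 2^m`, so it exchanges the two classes, and
`ρ⁽¹⁾(2^(m+1)) = 2^(k-1) ρ⁽¹⁾(2^m)`.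
Unwinding the two recursions gives the closed form.
-/

open Finset

/-- `rho k lam n` is the number of `k`-tuples `(x₁,…,x_k) ∈ (ℤ/nℤ)^k` with
`x₁² + ⋯ + x_k² ≡ lam (mod n)`. -/
noncomputable def rho (k : ℕ) (lam : ℤ) (n : ℕ) : ℕ :=
  Nat.card {x : Fin k → ZMod n // ∑ i, x i ^ 2 = (lam : ZMod n)}

/-- `rho1 k lam p s` is the number of `k`-tuples `(x₁,…,x_k) ∈ (ℤ/p^sℤ)^k` with
`x₁² + ⋯ + x_k² ≡ lam (mod p^s)` such that `p ∤ xᵢ` for at least one index `i`. -/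
noncomputable def rho1 (k : ℕ) (lam : ℤ) (p s : ℕ) : ℕ :=
  Nat.card {x : Fin k → ZMod (p ^ s) //
    (∑ i, x i ^ 2 = (lam : ZMod (p ^ s))) ∧ ∃ i, ¬ (p : ZMod (p ^ s)) ∣ x i}

section Counting

theorem card_subtype_or_eq_add {α : Type*} [Finite α] {p q : α → Prop}
    (h : ∀ x, p x → ¬ q x) :
    Nat.card {x // p x ∨ q x} = Nat.card {x // p x} + Nat.card {x // q x} := by
  classical
  rw [Nat.card_congr (subtypeOrEquiv p q (disjoint_iff_inf_le.mpr fun x hx => h x hx.1 hx.2)),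
    Nat.card_sum]

variable {α β : Type*} [Fintype α] [Fintype β]

theorem card_subtype_comp_eq_mul (f : α → β) {c : ℕ}
    (hf : ∀ a₀, Nat.card {a // f a = f a₀} = c) (P : β → Prop) :
    Nat.card {a // P (f a)} = c * Nat.card {b // P b ∧ b ∈ Set.range f} := by
  classical
  simp only [Nat.card_eq_fintype_card, Fintype.card_subtype] at hf ⊢
  rw [card_eq_sum_card_fiberwise (f := f) (t := {b | P b ∧ b ∈ Set.range f})
    (fun a ha => by simp_all), mul_comm, ← smul_eq_mul, ← sum_const]
  refine sum_congr rfl fun b hb => ?_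
  obtain ⟨-, a₀, rfl⟩ := (mem_filter.mp hb).2
  rw [← hf a₀, filter_filter]
  exact congrArg card <| filter_congr fun a _ =>
    and_iff_right_of_imp fun h => h ▸ (mem_filter.mp hb).2.1

theorem card_subtype_comp_eq_mul_of_surjective (f : α → β) (hf : f.Surjective) {c : ℕ}
    (hc : ∀ b, Nat.card {a // f a = b} = c) (P : β → Prop) :
    Nat.card {a // P (f a)} = c * Nat.card {b // P b} := by
  simp only [card_subtype_comp_eq_mul f (fun a₀ => hc (f a₀)), hf.range_eq, Set.mem_univ,
    and_true]

theorem AddMonoidHom.card_fiber_of_surjective {M N : Type*} [AddGroup M] [AddGroup N]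
    [Fintype M] [Fintype N] (f : M →+ N) (hf : Function.Surjective f) (b : N) :
    Nat.card {a // f a = b} = Nat.card M / Nat.card N := by
  classical
  have hM : Fintype.card M = Fintype.card N * #{a | f a = b} := by
    rw [← card_univ, card_eq_sum_card_fiberwise (f := f) (t := univ) (fun _ _ => mem_univ _),
      ← smul_eq_mul, ← card_univ, ← sum_const]
    exact sum_congr rfl fun b' _ => by
      simpa using AddMonoidHom.card_fiber_eq_of_mem_range f (hf b') (hf b)
  simp [Nat.card_eq_fintype_card, Fintype.card_subtype, hM]

end Counting

namespace ZMod

theorem exists_eq_two_mul_or_eq_two_mul_add_one {n : ℕ} (z : ZMod n) :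
    ∃ t, z = 2 * t ∨ z = 2 * t + 1 := by
  obtain ⟨t, ht | ht⟩ := Int.even_or_odd' (cast z : ℤ) <;>
  · refine ⟨t, ?_⟩
    rw [← intCast_zmod_cast z, ht]
    push_cast
    tauto

theorem castHom_eq_zero_iff_dvd {m n : ℕ} [NeZero m] (h : n ∣ m) (w : ZMod m) :
    castHom h (ZMod n) w = 0 ↔ (n : ZMod m) ∣ w := by
  constructor
  · intro hw
    rw [castHom_apply, ← natCast_val, natCast_eq_zero_iff] at hw
    obtain ⟨q, hq⟩ := hw
    exact ⟨q, by rw [← natCast_zmod_val w, hq, Nat.cast_mul]⟩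
  · rintro ⟨t, rfl⟩
    rw [map_mul, map_natCast, natCast_self, zero_mul]

theorem natCast_mul_eq_zero_iff {d n m : ℕ} [NeZero m] (hm : d * n = m) (hd : d ≠ 0)
    (w : ZMod m) : (d : ZMod m) * w = 0 ↔ castHom (Dvd.intro_left d hm) (ZMod n) w = 0 := by
  subst hm
  rw [← natCast_zmod_val w, ← Nat.cast_mul, natCast_eq_zero_iff, Nat.mul_dvd_mul_iff_left
    (Nat.pos_of_ne_zero hd), map_natCast, natCast_eq_zero_iff]

theorem natCast_dvd_castHom_iff {d n m : ℕ} [NeZero n] [NeZero m] (hd : d ∣ n) (h : n ∣ m)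
    (z : ZMod m) : (d : ZMod n) ∣ castHom h (ZMod n) z ↔ (d : ZMod m) ∣ z := by
  rw [← castHom_eq_zero_iff_dvd hd, ← castHom_eq_zero_iff_dvd (hd.trans h),
    ← RingHom.comp_apply, castHom_comp]

theorem card_fiber_castHom_compLeft {m n : ℕ} [NeZero n] [NeZero m] (h : n ∣ m) (ι : Type*)
    [Fintype ι] (z : ι → ZMod n) :
    Nat.card {y // (castHom h (ZMod n)).compLeft ι y = z} = (m / n) ^ Fintype.card ι := by
  classical
  refine (AddMonoidHom.card_fiber_of_surjective ((castHom h (ZMod n)).compLeft ι).toAddMonoidHom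
    (castHom_surjective h).comp_left z).trans ?_
  rw [Nat.card_fun, Nat.card_fun, Nat.card_zmod, Nat.card_zmod, Nat.div_pow h,
    Nat.card_eq_fintype_card]

end ZMod

section SumsOfSquares

variable (k p s : ℕ) [NeZero p]

theorem rho_pow_eq_rho1_add_card_dvd :
    rho k 0 (p ^ s) = rho1 k 0 p s +
      Nat.card {x : Fin k → ZMod (p ^ s) //
        ∑ i, x i ^ 2 = 0 ∧ ∀ i, (p : ZMod (p ^ s)) ∣ x i} := by
  rw [rho, rho1, ← card_subtype_or_eq_add fun _ h h' => let ⟨i, hi⟩ := h.2; hi (h'.2 i)]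
  exact Nat.card_congr (Equiv.subtypeEquivRight fun x => by
    rw [Int.cast_zero]
    by_cases hx : ∀ i, (p : ZMod (p ^ s)) ∣ x i <;> simp_all [not_forall])

theorem card_sum_sq_mul_eq_zero_eq_mul_card_dvd :
    Nat.card {y : Fin k → ZMod (p ^ (s + 2)) // ∑ i, ((p : ZMod _) * y i) ^ 2 = 0} =
      p ^ k * Nat.card {x : Fin k → ZMod (p ^ (s + 2)) //
        ∑ i, x i ^ 2 = 0 ∧ ∀ i, (p : ZMod (p ^ (s + 2))) ∣ x i} := by
  have hs : s + 1 ≤ s + 2 := by omega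
  let π := (ZMod.castHom (pow_dvd_pow p hs) (ZMod (p ^ (s + 1)))).compLeft (Fin k)
  have hfiber (y₀ : Fin k → ZMod (p ^ (s + 2))) :
      Nat.card {y : Fin k → ZMod (p ^ (s + 2)) //
        (fun i => (p : ZMod _) * y i) = fun i => (p : ZMod _) * y₀ i} = p ^ k := by
    have hmul (w : ZMod (p ^ (s + 2))) := ZMod.natCast_mul_eq_zero_iff
      (n := p ^ (s + 1)) (pow_succ' p (s + 1)).symm (NeZero.ne p) w
    calc _ = Nat.card {y // π y = π y₀} := Nat.card_congr (Equiv.subtypeEquivRight fun y => by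
            simp only [funext_iff]
            refine forall_congr' fun i => ?_
            rw [← sub_eq_zero, ← mul_sub, hmul, map_sub, sub_eq_zero]
            rfl)
      _ = p ^ k := by
        rw [ZMod.card_fiber_castHom_compLeft, Fintype.card_fin, Nat.pow_div hs (NeZero.pos p),
          Nat.add_sub_add_left, pow_one]
  refine (card_subtype_comp_eq_mul (fun (y : Fin k → ZMod (p ^ (s + 2))) i => (p : ZMod _) * y i)
    hfiber (fun x => ∑ i, x i ^ 2 = 0)).trans (congrArg _ ?_)
  refine Nat.card_congr (Equiv.subtypeEquivRight fun x => and_congr_right fun _ => ?_)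
  exact ⟨fun ⟨y, hy⟩ i => ⟨y i, (congrFun hy i).symm⟩,
    fun h => ⟨fun i => (h i).choose, funext fun i => (h i).choose_spec.symm⟩⟩

theorem card_sum_sq_mul_eq_zero_eq_mul_rho :
    Nat.card {y : Fin k → ZMod (p ^ (s + 2)) // ∑ i, ((p : ZMod _) * y i) ^ 2 = 0} =
      (p ^ 2) ^ k * rho k 0 (p ^ s) := by
  have hs : s ≤ s + 2 := by omega
  let π := (ZMod.castHom (pow_dvd_pow p hs) (ZMod (p ^ s))).compLeft (Fin k)
  have hsq (y : Fin k → ZMod (p ^ (s + 2))) :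
      ∑ i, ((p : ZMod _) * y i) ^ 2 = 0 ↔ ∑ i, π y i ^ 2 = 0 := by
    simp only [mul_pow, ← mul_sum, ← Nat.cast_pow]
    rw [ZMod.natCast_mul_eq_zero_iff (by rw [← pow_add, add_comm]) (NeZero.ne _), map_sum]
    simp only [map_pow]
    rfl
  have hfiber (z : Fin k → ZMod (p ^ s)) : Nat.card {y // π y = z} = (p ^ 2) ^ k := by
    rw [ZMod.card_fiber_castHom_compLeft, Fintype.card_fin, Nat.pow_div hs (NeZero.pos p),
      Nat.add_sub_cancel_left]
  rw [Nat.card_congr (Equiv.subtypeEquivRight hsq), card_subtype_comp_eq_mul_of_surjective π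
    (ZMod.castHom_surjective (pow_dvd_pow p hs)).comp_left hfiber (fun z => ∑ i, z i ^ 2 = 0),
    rho, Int.cast_zero]

theorem card_sum_sq_eq_zero_forall_dvd :
    Nat.card {x : Fin k → ZMod (p ^ (s + 2)) //
      ∑ i, x i ^ 2 = 0 ∧ ∀ i, (p : ZMod (p ^ (s + 2))) ∣ x i} =
      p ^ k * rho k 0 (p ^ s) := by
  have h := (card_sum_sq_mul_eq_zero_eq_mul_card_dvd k p s).symm.trans
    (card_sum_sq_mul_eq_zero_eq_mul_rho k p s)
  rw [← pow_mul, mul_comm 2 k, pow_mul, sq, mul_assoc] at h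
  exact Nat.eq_of_mul_eq_mul_left (pow_pos (NeZero.pos p) k) h

theorem rho_pow_add_two :
    rho k 0 (p ^ (s + 2)) = rho1 k 0 p (s + 2) + p ^ k * rho k 0 (p ^ s) := by
  rw [rho_pow_eq_rho1_add_card_dvd, card_sum_sq_eq_zero_forall_dvd]

theorem rho_pow_one : rho k 0 (p ^ 1) = rho1 k 0 p 1 + 1 := by
  have hp : (p : ZMod (p ^ 1)) = 0 := by rw [pow_one, ZMod.natCast_self]
  rw [rho_pow_eq_rho1_add_card_dvd, Nat.card_eq_one_iff_exists.mpr]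
  refine ⟨⟨0, by simp, fun _ => dvd_zero _⟩,
    fun ⟨y, _, hy⟩ => Subtype.ext (funext fun i => ?_)⟩
  simpa [hp] using hy i

theorem rho_one : rho k 0 1 = 1 := by
  rw [rho]
  exact Nat.card_eq_one_iff_exists.mpr
    ⟨⟨0, Subsingleton.elim _ _⟩, fun _ => Subsingleton.elim _ _⟩

end SumsOfSquares

section OddShift

variable {ι : Type*} [Nonempty ι] {n : ℕ}

/-- Any odd coordinate would do; choosing it with `Classical.epsilon` makes it depend only on
the parity pattern of `x`, which `oddShift` preserves. -/
noncomputable def oddIndex (x : ι → ZMod n) : ι :=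
  Classical.epsilon fun i => ¬ (2 : ZMod n) ∣ x i

theorem not_two_dvd_oddIndex {x : ι → ZMod n} (hx : ∃ i, ¬ (2 : ZMod n) ∣ x i) :
    ¬ (2 : ZMod n) ∣ x (oddIndex x) :=
  Classical.epsilon_spec hx

variable [DecidableEq ι]

noncomputable def oddShift (c : ZMod n) (x : ι → ZMod n) : ι → ZMod n :=
  Function.update x (oddIndex x) (x (oddIndex x) + c)

theorem two_dvd_oddShift_iff {c : ZMod n} (hc : (2 : ZMod n) ∣ c) (x : ι → ZMod n) (i : ι) :
    (2 : ZMod n) ∣ oddShift c x i ↔ (2 : ZMod n) ∣ x i := by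
  rcases eq_or_ne i (oddIndex x) with rfl | hi
  · rw [oddShift, Function.update_self, dvd_add_left hc]
  · rw [oddShift, Function.update_of_ne hi]

theorem oddIndex_oddShift {c : ZMod n} (hc : (2 : ZMod n) ∣ c) (x : ι → ZMod n) :
    oddIndex (oddShift c x) = oddIndex x := by
  simp only [oddIndex, two_dvd_oddShift_iff hc]

theorem oddShift_neg_oddShift {c : ZMod n} (hc : (2 : ZMod n) ∣ c) (x : ι → ZMod n) :
    oddShift (-c) (oddShift c x) = x := by
  rw [oddShift, oddIndex_oddShift hc, oddShift, Function.update_self, Function.update_idem,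
    add_neg_cancel_right, Function.update_eq_self]

noncomputable def oddShiftEquiv {c : ZMod n} (hc : (2 : ZMod n) ∣ c) :
    (ι → ZMod n) ≃ (ι → ZMod n) where
  toFun := oddShift c
  invFun := oddShift (-c)
  left_inv := oddShift_neg_oddShift hc
  right_inv x := by
    simpa using oddShift_neg_oddShift (c := -c) ((dvd_neg).mpr hc) x

theorem sum_sq_oddShift [Fintype ι] {c : ZMod n} (h4 : 4 * c = 0) (hc : c ^ 2 = 0)
    {x : ι → ZMod n} (hx : ∃ i, ¬ (2 : ZMod n) ∣ x i) :
    ∑ i, oddShift c x i ^ 2 = ∑ i, x i ^ 2 + 2 * c := by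
  obtain ⟨t, ht | ht⟩ := ZMod.exists_eq_two_mul_or_eq_two_mul_add_one (x (oddIndex x))
  · exact absurd ⟨t, ht⟩ (not_two_dvd_oddIndex hx)
  have hrest : ∑ i ∈ univ.erase (oddIndex x), oddShift c x i ^ 2 =
      ∑ i ∈ univ.erase (oddIndex x), x i ^ 2 :=
    sum_congr rfl fun i hi => by rw [oddShift, Function.update_of_ne (ne_of_mem_erase hi)]
  rw [← add_sum_erase _ _ (mem_univ (oddIndex x)), ← add_sum_erase _ (fun i => x i ^ 2)
    (mem_univ (oddIndex x)), hrest, oddShift, Function.update_self, ht]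
  linear_combination t * h4 + hc

end OddShift

section PrimitiveLift

variable (k m : ℕ)

theorem castHom_two_pow_succ_eq_zero_iff (w : ZMod (2 ^ (m + 1))) :
    ZMod.castHom (pow_dvd_pow 2 (Nat.le_add_right m 1)) (ZMod (2 ^ m)) w = 0 ↔
      w = 0 ∨ w = 2 ^ m := by
  have h0 : (2 : ZMod (2 ^ (m + 1))) ^ (m + 1) = 0 := by
    exact_mod_cast ZMod.natCast_self (2 ^ (m + 1))
  rw [ZMod.castHom_eq_zero_iff_dvd, Nat.cast_pow, Nat.cast_ofNat]
  constructor
  · rintro ⟨t, rfl⟩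
    obtain ⟨u, rfl | rfl⟩ := ZMod.exists_eq_two_mul_or_eq_two_mul_add_one t
    · left
      rw [← mul_assoc, ← pow_succ, h0, zero_mul]
    · right
      rw [mul_add, ← mul_assoc, ← pow_succ, h0, zero_mul, zero_add, mul_one]
  · rintro (rfl | rfl)
    exacts [dvd_zero _, dvd_rfl]

theorem card_castHom_sum_sq_eq_zero_primitive (hm : 1 ≤ m) :
    Nat.card {x : Fin k → ZMod (2 ^ (m + 1)) //
      ZMod.castHom (pow_dvd_pow 2 (Nat.le_add_right m 1)) (ZMod (2 ^ m)) (∑ i, x i ^ 2) = 0 ∧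
        ∃ i, ¬ (2 : ZMod (2 ^ (m + 1))) ∣ x i} = 2 ^ k * rho1 k 0 2 m := by
  have hdvd : 2 ^ m ∣ 2 ^ (m + 1) := pow_dvd_pow 2 (Nat.le_add_right m 1)
  let π := (ZMod.castHom hdvd (ZMod (2 ^ m))).compLeft (Fin k)
  have hfiber (z : Fin k → ZMod (2 ^ m)) : Nat.card {x // π x = z} = 2 ^ k := by
    rw [ZMod.card_fiber_castHom_compLeft, Fintype.card_fin,
      Nat.pow_div (Nat.le_add_right m 1) two_pos, Nat.add_sub_cancel_left, pow_one]
  have hcond (x : Fin k → ZMod (2 ^ (m + 1))) :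
      (ZMod.castHom hdvd (ZMod (2 ^ m)) (∑ i, x i ^ 2) = 0 ∧
        ∃ i, ¬ (2 : ZMod (2 ^ (m + 1))) ∣ x i) ↔
      (∑ i, π x i ^ 2 = 0 ∧ ∃ i, ¬ (2 : ZMod (2 ^ m)) ∣ π x i) := by
    have h2 : 2 ∣ 2 ^ m := dvd_pow_self 2 (by omega)
    simp only [map_sum, map_pow, ← Nat.cast_ofNat (R := ZMod _), π, RingHom.compLeft_apply,
      Function.comp_apply, ZMod.natCast_dvd_castHom_iff h2]
  rw [Nat.card_congr (Equiv.subtypeEquivRight hcond), card_subtype_comp_eq_mul_of_surjective π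
    (ZMod.castHom_surjective hdvd).comp_left hfiber
    (fun z => ∑ i, z i ^ 2 = 0 ∧ ∃ i, ¬ (2 : ZMod (2 ^ m)) ∣ z i), rho1]
  simp

theorem card_sum_sq_eq_zero_primitive_eq_card_eq_two_pow (hk : 0 < k) (hm : 3 ≤ m) :
    Nat.card {x : Fin k → ZMod (2 ^ (m + 1)) //
      ∑ i, x i ^ 2 = 0 ∧ ∃ i, ¬ (2 : ZMod (2 ^ (m + 1))) ∣ x i} =
    Nat.card {x : Fin k → ZMod (2 ^ (m + 1)) //
      ∑ i, x i ^ 2 = 2 ^ m ∧ ∃ i, ¬ (2 : ZMod (2 ^ (m + 1))) ∣ x i} := by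
  have : Nonempty (Fin k) := Fin.pos_iff_nonempty.mp hk
  have h0 : (2 : ZMod (2 ^ (m + 1))) ^ (m + 1) = 0 := by
    exact_mod_cast ZMod.natCast_self (2 ^ (m + 1))
  have hc : (2 : ZMod (2 ^ (m + 1))) ∣ 2 ^ (m - 1) := dvd_pow_self 2 (by omega)
  have h4 : 4 * (2 : ZMod (2 ^ (m + 1))) ^ (m - 1) = 0 := by
    rw [show (4 : ZMod (2 ^ (m + 1))) = 2 ^ 2 by norm_num, ← pow_add,
      show 2 + (m - 1) = m + 1 by omega, h0]
  have hsq : ((2 : ZMod (2 ^ (m + 1))) ^ (m - 1)) ^ 2 = 0 := by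
    rw [← pow_mul]
    exact pow_eq_zero_of_le (by omega) h0
  have h2c : 2 * (2 : ZMod (2 ^ (m + 1))) ^ (m - 1) = 2 ^ m := by
    rw [← pow_succ', Nat.sub_add_cancel (by omega)]
  refine Nat.card_congr ((oddShiftEquiv hc).subtypeEquiv fun x => ?_)
  simp only [oddShiftEquiv, Equiv.coe_fn_mk, two_dvd_oddShift_iff hc]
  refine ⟨fun ⟨hx, hprim⟩ => ⟨?_, hprim⟩, fun ⟨hx, hprim⟩ => ⟨?_, hprim⟩⟩
  · rw [sum_sq_oddShift h4 hsq hprim, hx, zero_add, h2c]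
  · rwa [sum_sq_oddShift h4 hsq hprim, h2c, add_eq_right] at hx

theorem two_mul_rho1_two_pow_succ (hk : 0 < k) (hm : 3 ≤ m) :
    2 * rho1 k 0 2 (m + 1) = 2 ^ k * rho1 k 0 2 m := by
  have hne : (2 : ZMod (2 ^ (m + 1))) ^ m ≠ 0 := by
    intro h
    have : 2 ^ (m + 1) ∣ 2 ^ m := (ZMod.natCast_eq_zero_iff _ _).mp (by exact_mod_cast h)
    exact absurd (Nat.pow_dvd_pow_iff_le_right one_lt_two |>.mp this) (by omega)
  rw [← card_castHom_sum_sq_eq_zero_primitive k m (by omega)]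
  simp only [castHom_two_pow_succ_eq_zero_iff, or_and_right]
  rw [card_subtype_or_eq_add fun x h h' => hne (h'.1.symm.trans h.1),
    ← card_sum_sq_eq_zero_primitive_eq_card_eq_two_pow k m hk hm, ← two_mul, rho1]
  simp

theorem rho1_two_pow_add_three (hk : 0 < k) (n : ℕ) :
    rho1 k 0 2 (n + 3) = 2 ^ (n * (k - 1)) * rho1 k 0 2 3 := by
  obtain ⟨j, rfl⟩ := Nat.exists_eq_add_of_lt hk
  induction n with
  | zero => simp
  | succ n ih =>
    apply Nat.eq_of_mul_eq_mul_left two_pos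
    rw [two_mul_rho1_two_pow_succ _ _ hk (by omega), ih]
    simp only [zero_add, Nat.add_sub_cancel]
    ring

end PrimitiveLift

/-- The right-hand side of `rho_two_pow_zero`, with `a` in place of `ρ⁽¹⁾(8)` and `b m` in
place of `ρ⁽¹⁾(2^m)`. -/
def rhoTwoPowClosedForm (k a : ℕ) (b : ℕ → ℕ) (s : ℕ) : ℕ :=
  ∑ i ∈ range ((s - 1) / 2), 2 ^ (k * i + (s - 2 * i - 3) * (k - 1)) * a
    + 2 ^ ((s - 1) / 2 * k) * b (s - 2 * ((s - 1) / 2)) + 2 ^ (s / 2 * k)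

theorem rhoTwoPowClosedForm_add_three (k a : ℕ) (b : ℕ → ℕ) (s : ℕ) :
    rhoTwoPowClosedForm k a b (s + 3) =
      2 ^ (s * (k - 1)) * a + 2 ^ k * rhoTwoPowClosedForm k a b (s + 1) := by
  have hsum (i : ℕ) : 2 ^ (k * (i + 1) + (s + 3 - 2 * (i + 1) - 3) * (k - 1)) * a =
      2 ^ k * (2 ^ (k * i + (s + 1 - 2 * i - 3) * (k - 1)) * a) := by
    rw [show s + 3 - 2 * (i + 1) - 3 = s + 1 - 2 * i - 3 by omega, ← mul_assoc, ← pow_add]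
    ring_nf
  rw [rhoTwoPowClosedForm, rhoTwoPowClosedForm,
    show (s + 3 - 1) / 2 = (s + 1 - 1) / 2 + 1 by omega, sum_range_succ',
    show s + 3 - 2 * ((s + 1 - 1) / 2 + 1) = s + 1 - 2 * ((s + 1 - 1) / 2) by omega,
    show (s + 3) / 2 = (s + 1) / 2 + 1 by omega, sum_congr rfl fun i _ => hsum i, ← mul_sum]
  simp only [mul_zero, zero_add, Nat.sub_zero, Nat.add_sub_cancel]
  ring

/-- `ρ_{k,0}(2^s) = Σ_{i=0}^{⌊(s−1)/2⌋−1} 2^{ki+(s−2i−3)(k−1)} · ρ^{(1)}_{k,0}(8)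
+ 2^{⌊(s−1)/2⌋k} · ρ^{(1)}_{k,0}(2^{s−2⌊(s−1)/2⌋}) + 2^{⌊s/2⌋k}`. -/
theorem rho_two_pow_zero (k : ℕ) (hk : 0 < k) (s : ℕ) (hs : 1 ≤ s) :
    rho k 0 (2 ^ s) =
      ∑ i ∈ Finset.range ((s - 1) / 2),
        2 ^ (k * i + (s - 2 * i - 3) * (k - 1)) * rho1 k 0 2 3
      + 2 ^ ((s - 1) / 2 * k) * rho1 k 0 2 (s - 2 * ((s - 1) / 2))
      + 2 ^ (s / 2 * k) := by
  change rho k 0 (2 ^ s) = rhoTwoPowClosedForm k (rho1 k 0 2 3) (rho1 k 0 2) s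
  induction s using Nat.strong_induction_on with
  | _ s ih =>
  match s, hs with
  | 1, _ => rw [rho_pow_one]; simp [rhoTwoPowClosedForm]
  | 2, _ => rw [rho_pow_add_two k 2 0, pow_zero, rho_one]; simp [rhoTwoPowClosedForm]
  | s + 3, _ =>
    rw [rho_pow_add_two, ih (s + 1) (by omega) (by omega), rho1_two_pow_add_three k hk,
      rhoTwoPowClosedForm_add_three]
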